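/- (Example: f_l(u) = u, f_r(u) = −u.) Take u_0 = u_1 = 1, so that κ = f_l(1) − f_r(1) = 2, and define u_{0,ε} = 1 + 1/ε, u_{1,ε} = 1 + 1/ε. Then the shadow wave net (u_ε) is a weak asymptotic solution of ∂_t u + ∂_x f(x,u) = 0, and for every φ ∈ C_c^∞(ℝ × (0,∞)), ∫_0^∞ ∫_ℝ u_ε φ dx dt → ∫_0^∞ ∫_ℝ φ dx dt + 2 ∫_0^∞ t φ(0,t) dt, i.e. u_ε converges distributionally to the delta shock 1 + 2t δ(x). -/

import Mathlib

open MeasureTheory Filter Set Topology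

/-- The shadow wave net centered at `x = 0`: for fixed `ε > 0`,
`u_ε(x,t) = u0` for `x < -εt`, `u0e` for `-εt < x < 0`,
`u1e` for `0 < x < εt` and `u1` for `x > εt`. -/
noncomputable def sdw (u0 u1 u0e u1e ε x t : ℝ) : ℝ :=
  if x < -(ε * t) then u0
  else if x < 0 then u0e
  else if x < ε * t then u1e
  else u1

/-- The two-flux function `f(x,u) = f_l(u)` for `x < 0`, `f_r(u)` for `x > 0`. -/
noncomputable def twoFlux (fl fr : ℝ → ℝ) (x u : ℝ) : ℝ :=
  if x < 0 then fl u else fr u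

/-- Test functions `φ ∈ C_c^∞(ℝ × (0,∞))`. -/
def IsTestFun (φ : ℝ × ℝ → ℝ) : Prop :=
  ContDiff ℝ (⊤ : ℕ∞) φ ∧ HasCompactSupport φ ∧ ∀ p : ℝ × ℝ, p.2 ≤ 0 → φ p = 0

/-- The net `(u_ε)` (with intermediate states `u0e ε`, `u1e ε`) is a weak asymptotic
solution of `∂_t u + ∂_x f(x,u) = 0`. -/
def WeakAsymptoticSolution (fl fr : ℝ → ℝ) (u0 u1 : ℝ) (u0e u1e : ℝ → ℝ) : Prop :=
  ∀ φ : ℝ × ℝ → ℝ, IsTestFun φ →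
    Tendsto (fun ε : ℝ =>
        ∫ t in Ioi (0:ℝ), ∫ x : ℝ,
          (sdw u0 u1 (u0e ε) (u1e ε) ε x t * fderiv ℝ φ (x, t) (0, 1) +
           twoFlux fl fr x (sdw u0 u1 (u0e ε) (u1e ε) ε x t) * fderiv ℝ φ (x, t) (1, 0)))
      (𝓝[>] (0:ℝ)) (𝓝 0)

/-- The net `(u_ε)` converges distributionally to `U(x) + k t δ(x)`,
where `U(x) = u0` for `x < 0` and `u1` for `x > 0`. -/
def ConvergesToDeltaShock (u0 u1 : ℝ) (u0e u1e : ℝ → ℝ) (k : ℝ) : Prop :=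
  ∀ φ : ℝ × ℝ → ℝ, IsTestFun φ →
    Tendsto (fun ε : ℝ =>
        ∫ t in Ioi (0:ℝ), ∫ x : ℝ, sdw u0 u1 (u0e ε) (u1e ε) ε x t * φ (x, t))
      (𝓝[>] (0:ℝ))
      (𝓝 ((∫ t in Ioi (0:ℝ), ∫ x : ℝ, (if x < 0 then u0 else u1) * φ (x, t)) +
           k * ∫ t in Ioi (0:ℝ), t * φ (0, t)))

/-! ### Auxiliary lemmas -/

private lemma hderiv_x {φ : ℝ × ℝ → ℝ} (hφ : Differentiable ℝ φ) (a t : ℝ) :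
    HasDerivAt (fun x => φ (x, t)) (fderiv ℝ φ (a, t) (1, 0)) a := by
  have h := ((hφ (a, t)).hasFDerivAt).comp_hasDerivAt a
    ((hasDerivAt_id a).prodMk (hasDerivAt_const a t))
  simpa [Function.comp_def] using h

private lemma hderiv_t {φ : ℝ × ℝ → ℝ} (hφ : Differentiable ℝ φ) (x t : ℝ) :
    HasDerivAt (fun t => φ (x, t)) (fderiv ℝ φ (x, t) (0, 1)) t := by
  have h := ((hφ (x, t)).hasFDerivAt).comp_hasDerivAt t
    ((hasDerivAt_const t x).prodMk (hasDerivAt_id t))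
  simpa [Function.comp_def] using h

private lemma hderiv_diag {φ : ℝ × ℝ → ℝ} (hφ : Differentiable ℝ φ) (c t : ℝ) :
    HasDerivAt (fun ε => φ (ε * c, t)) (fderiv ℝ φ (0, t) (c, 0)) 0 := by
  have h := ((hφ ((0:ℝ) * c, t)).hasFDerivAt).comp_hasDerivAt 0
    ((hasDerivAt_mul_const c).prodMk (hasDerivAt_const (0:ℝ) t))
  simpa [Function.comp_def] using h

private lemma integrable_slice_x {f : ℝ × ℝ → ℝ} (hf : Continuous f) {T : ℝ}
    (hT : ∀ p : ℝ × ℝ, T ≤ |p.1| → f p = 0) (t : ℝ) :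
    Integrable (fun x => f (x, t)) := by
  apply Continuous.integrable_of_hasCompactSupport (by fun_prop)
  apply HasCompactSupport.intro (isCompact_Icc (a := -T) (b := T))
  intro x hx
  apply hT
  simp only [mem_Icc, not_and_or, not_le] at hx
  simp only [le_abs]
  rcases hx with h | h
  · exact Or.inr (by linarith)
  · exact Or.inl (by linarith)

private lemma integrable_slice_t {f : ℝ × ℝ → ℝ} (hf : Continuous f) {T : ℝ}
    (hT : ∀ p : ℝ × ℝ, T ≤ |p.2| → f p = 0) (x : ℝ) :
    Integrable (fun t => f (x, t)) := by
  apply Continuous.integrable_of_hasCompactSupport (by fun_prop)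
  apply HasCompactSupport.intro (isCompact_Icc (a := -T) (b := T))
  intro t ht
  apply hT
  simp only [mem_Icc, not_and_or, not_le] at ht
  simp only [le_abs]
  rcases ht with h | h
  · exact Or.inr (by linarith)
  · exact Or.inl (by linarith)

private lemma subst_scale (f : ℝ → ℝ) {ε t : ℝ} (hε : 0 < ε) (ht : 0 < t) :
    ε⁻¹ * ∫ x in Ico (-(ε * t)) (ε * t), f x = ∫ y in Ioc (-t) t, f (ε * y) := by
  have h1 : -(ε * t) ≤ ε * t := by nlinarith
  have h2 : (-t : ℝ) ≤ t := by linarith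
  have e1 : ∫ x in Ico (-(ε * t)) (ε * t), f x = ∫ x in (-(ε * t))..(ε * t), f x := by
    rw [integral_Ico_eq_integral_Ioo, intervalIntegral.integral_of_le h1,
      integral_Ioc_eq_integral_Ioo]
  have e2 : ∫ y in Ioc (-t) t, f (ε * y) = ∫ y in (-t)..t, f (ε * y) :=
    (intervalIntegral.integral_of_le h2).symm
  rw [e1, e2, intervalIntegral.integral_comp_mul_left f (ne_of_gt hε)]
  rw [smul_eq_mul]
  ring_nf

private lemma ftc_x {φ : ℝ × ℝ → ℝ} (hφ : ContDiff ℝ (⊤ : ℕ∞) φ) {T : ℝ}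
    (hT : ∀ p : ℝ × ℝ, T ≤ |p.1| → fderiv ℝ φ p = 0) (a b t : ℝ) :
    ∫ x in a..b, fderiv ℝ φ (x, t) (1, 0) = φ (b, t) - φ (a, t) := by
  apply intervalIntegral.integral_eq_sub_of_hasDerivAt
    (fun x _ => hderiv_x (hφ.differentiable (by simp)) x t)
  apply Integrable.intervalIntegrable
  exact integrable_slice_x
    ((hφ.continuous_fderiv (by simp)).clm_apply continuous_const)
    (fun p hp => by rw [hT p hp]; rfl) t

private lemma ftc_x_Iio {φ : ℝ × ℝ → ℝ} (hφ : ContDiff ℝ (⊤ : ℕ∞) φ) {T : ℝ}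
    (hTpos : 0 < T) (hφ0 : ∀ p : ℝ × ℝ, T ≤ |p.1| → φ p = 0)
    (hT : ∀ p : ℝ × ℝ, T ≤ |p.1| → fderiv ℝ φ p = 0) (t : ℝ) :
    ∫ x in Iio (0:ℝ), fderiv ℝ φ (x, t) (1, 0) = φ (0, t) := by
  rw [← integral_Iic_eq_integral_Iio]
  have h := integral_Iic_of_hasDerivAt_of_tendsto (f := fun x => φ (x, t))
    (f' := fun x => fderiv ℝ φ (x, t) (1, 0)) (a := 0) (m := 0)
    (Continuous.continuousWithinAt (hφ.continuous.comp (by fun_prop)))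
    (fun x _ => hderiv_x (hφ.differentiable (by simp)) x t)
    ((integrable_slice_x ((hφ.continuous_fderiv (by simp)).clm_apply continuous_const)
      (fun p hp => by rw [hT p hp]; rfl) t).integrableOn)
    ?_
  · rw [h]; ring
  · apply Tendsto.congr' _ tendsto_const_nhds
    filter_upwards [Iic_mem_atBot (-T)] with x hx
    refine (hφ0 (x, t) ?_).symm
    show T ≤ |x|
    simp only [mem_Iic] at hx
    rw [abs_of_nonpos (by linarith)]; linarith

private lemma ftc_x_Ioi {φ : ℝ × ℝ → ℝ} (hφ : ContDiff ℝ (⊤ : ℕ∞) φ) {T : ℝ}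
    (hTpos : 0 < T) (hφ0 : ∀ p : ℝ × ℝ, T ≤ |p.1| → φ p = 0)
    (hT : ∀ p : ℝ × ℝ, T ≤ |p.1| → fderiv ℝ φ p = 0) (t : ℝ) :
    ∫ x in Ioi (0:ℝ), fderiv ℝ φ (x, t) (1, 0) = -φ (0, t) := by
  have h := integral_Ioi_of_hasDerivAt_of_tendsto (f := fun x => φ (x, t))
    (f' := fun x => fderiv ℝ φ (x, t) (1, 0)) (a := 0) (m := 0)
    (Continuous.continuousWithinAt (hφ.continuous.comp (by fun_prop)))
    (fun x _ => hderiv_x (hφ.differentiable (by simp)) x t)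
    ((integrable_slice_x ((hφ.continuous_fderiv (by simp)).clm_apply continuous_const)
      (fun p hp => by rw [hT p hp]; rfl) t).integrableOn)
    ?_
  · rw [h]; ring
  · apply Tendsto.congr' _ tendsto_const_nhds
    filter_upwards [Ici_mem_atTop T] with x hx
    refine (hφ0 (x, t) ?_).symm
    show T ≤ |x|
    simp only [mem_Ici] at hx
    rw [abs_of_nonneg (by linarith)]; linarith

private lemma sdw_formula {ε x t : ℝ} (hε : 0 < ε) (ht : 0 < t) :
    sdw 1 1 (1 + 1/ε) (1 + 1/ε) ε x t
      = 1 + ε⁻¹ * (Ico (-(ε * t)) (ε * t)).indicator (fun _ => (1:ℝ)) x := by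
  have hεt : 0 < ε * t := mul_pos hε ht
  unfold sdw
  rcases lt_or_ge x (-(ε * t)) with h1 | h1
  · rw [if_pos h1, indicator_of_notMem (by simp [mem_Ico]; intro h; linarith)]
    ring
  · rw [if_neg (not_lt.2 h1)]
    rcases lt_or_ge x (ε * t) with h3 | h3
    · have hmem : x ∈ Ico (-(ε * t)) (ε * t) := ⟨h1, h3⟩
      rw [indicator_of_mem hmem]
      rcases lt_or_ge x 0 with h2 | h2
      · rw [if_pos h2]; field_simp
      · rw [if_neg (not_lt.2 h2), if_pos h3]; field_simp
    · rw [if_neg (not_lt.2 (by linarith : (0:ℝ) ≤ x)), if_neg (not_lt.2 h3),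
        indicator_of_notMem (by simp [mem_Ico]; intro h; linarith)]
      ring

private lemma inner_dct {f : ℝ × ℝ → ℝ} (hf : Continuous f) {C : ℝ}
    (hC : ∀ p, ‖f p‖ ≤ C) {t : ℝ} (ht : 0 < t) :
    Tendsto (fun ε => ∫ y in Ioc (-t) t, f (ε * y, t)) (nhdsWithin 0 (Ioi 0))
      (nhds (2 * t * f (0, t))) := by
  have hlim : (2 * t * f (0, t)) = ∫ _y in Ioc (-t) t, f (0, t) := by
    rw [setIntegral_const, Real.volume_real_Ioc, smul_eq_mul,
      max_eq_left (by linarith)]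
    ring
  rw [hlim]
  apply tendsto_integral_filter_of_dominated_convergence (fun _ => C)
  · filter_upwards with ε
    exact (hf.comp (by fun_prop)).aestronglyMeasurable
  · filter_upwards with ε
    filter_upwards with y
    exact hC _
  · exact (integrableOn_const measure_Ioc_lt_top.ne)
  · filter_upwards with y
    have h : Tendsto (fun ε : ℝ => f (ε * y, t)) (nhds 0) (nhds (f (0, t))) := by
      simpa [Function.comp_def] using (hf.comp (show Continuous fun ε : ℝ => (ε * y, t) by fun_prop)).tendsto 0
    exact h.mono_left nhdsWithin_le_nhds

private lemma asm_ioc {f : ℝ × ℝ → ℝ} (hf : Continuous f) (ε : ℝ) :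
    AEStronglyMeasurable (fun t => ∫ y in Ioc (-t) t, f (ε * y, t))
      (volume.restrict (Ioi (0:ℝ))) := by
  have hS : MeasurableSet {p : ℝ × ℝ | -p.1 < p.2 ∧ p.2 ≤ p.1} :=
    (measurableSet_lt (measurable_fst.neg) measurable_snd).inter
      (measurableSet_le measurable_snd measurable_fst)
  have h1 : ∀ t : ℝ, (∫ y in Ioc (-t) t, f (ε * y, t))
      = ∫ y, ({p : ℝ × ℝ | -p.1 < p.2 ∧ p.2 ≤ p.1}.indicator
          (fun p => f (ε * p.2, p.1))) (t, y) := by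
    intro t
    rw [← integral_indicator measurableSet_Ioc]
    refine integral_congr_ae (Eventually.of_forall fun y => ?_)
    by_cases h : y ∈ Ioc (-t) t
    · have h' : (t, y) ∈ {p : ℝ × ℝ | -p.1 < p.2 ∧ p.2 ≤ p.1} := h
      simp only [indicator_apply, if_pos h, if_pos h']
    · have h' : (t, y) ∉ {p : ℝ × ℝ | -p.1 < p.2 ∧ p.2 ≤ p.1} := h
      simp only [indicator_apply, if_neg h, if_neg h']
  simp_rw [h1]
  apply AEStronglyMeasurable.integral_prod_right'
  exact ((Measurable.indicator ((hf.comp (by fun_prop)).measurable) hS).aestronglyMeasurable)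

private lemma asm_full {f : ℝ × ℝ → ℝ} (hf : Continuous f) :
    AEStronglyMeasurable (fun t => ∫ x, f (x, t)) (volume.restrict (Ioi (0:ℝ))) :=
  AEStronglyMeasurable.integral_prod_right'
    (f := fun p : ℝ × ℝ => f (p.2, p.1)) ((hf.comp (by fun_prop)).aestronglyMeasurable)

private lemma norm_intIoc_le {g : ℝ → ℝ} {C t : ℝ} (hg : ∀ y, ‖g y‖ ≤ C) (ht : 0 < t)
    (hm : AEStronglyMeasurable g (volume.restrict (Ioc (-t) t))) :
    ‖∫ y in Ioc (-t) t, g y‖ ≤ C * (2 * t) := by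
  have h := norm_setIntegral_le_of_norm_le_const (μ := volume) (s := Ioc (-t) t)
    measure_Ioc_lt_top (fun y _ => hg y)
  rwa [Real.volume_real_Ioc, max_eq_left (by linarith), show t - -t = 2 * t by ring] at h

private lemma norm_intx_le {f : ℝ × ℝ → ℝ} (hf : Continuous f) {C T : ℝ} (hT : 0 < T)
    (hC : ∀ p, ‖f p‖ ≤ C) (hsupp : ∀ p : ℝ × ℝ, T ≤ |p.1| → f p = 0) (t : ℝ) :
    ‖∫ x, f (x, t)‖ ≤ C * (2 * T) := by
  rw [← setIntegral_eq_integral_of_forall_compl_eq_zero (s := Icc (-T) T)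
    (fun x hx => hsupp (x, t) (by
      simp only [mem_Icc, not_and_or, not_le] at hx
      simp only [le_abs]
      rcases hx with h | h
      · exact Or.inr (by linarith)
      · exact Or.inl (by linarith)))]
  have h := norm_setIntegral_le_of_norm_le_const (μ := volume) (s := Icc (-T) T)
    measure_Icc_lt_top (fun x _ => hC (x, t))
  rwa [Real.volume_real_Icc, max_eq_left (by linarith), show T - -T = 2 * T by ring] at h

private lemma ftc_t_Ioi {φ : ℝ × ℝ → ℝ} (hφ : ContDiff ℝ (⊤ : ℕ∞) φ)
    (h0 : ∀ p : ℝ × ℝ, p.2 ≤ 0 → φ p = 0) {T : ℝ} (hTpos : 0 < T)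
    (hφ0 : ∀ p : ℝ × ℝ, T ≤ |p.2| → φ p = 0)
    (hT : ∀ p : ℝ × ℝ, T ≤ |p.2| → fderiv ℝ φ p = 0) (x : ℝ) :
    ∫ t in Ioi (0:ℝ), fderiv ℝ φ (x, t) (0, 1) = 0 := by
  have h := integral_Ioi_of_hasDerivAt_of_tendsto (f := fun t => φ (x, t))
    (f' := fun t => fderiv ℝ φ (x, t) (0, 1)) (a := 0) (m := 0)
    (Continuous.continuousWithinAt (hφ.continuous.comp (by fun_prop)))
    (fun t _ => hderiv_t (hφ.differentiable (by simp)) x t)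
    ((integrable_slice_t ((hφ.continuous_fderiv (by simp)).clm_apply continuous_const)
      (fun p hp => by rw [hT p hp]; rfl) x).integrableOn) ?_
  · rw [h]; simp [h0 (x, 0) le_rfl]
  · apply Tendsto.congr' _ tendsto_const_nhds
    filter_upwards [Ici_mem_atTop T] with t htT
    refine (hφ0 (x, t) ?_).symm
    show T ≤ |t|
    simp only [mem_Ici] at htT
    rw [abs_of_nonneg (by linarith)]
    exact htT

private lemma fubini_swap {f : ℝ × ℝ → ℝ} (hf : Continuous f) {T : ℝ}
    (h : ∀ p : ℝ × ℝ, T ≤ |p.1| ∨ T ≤ |p.2| → f p = 0) :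
    ∫ t in Ioi (0:ℝ), ∫ x, f (x, t) = ∫ x, ∫ t in Ioi (0:ℝ), f (x, t) := by
  have hint : Integrable (fun q : ℝ × ℝ => f (q.2, q.1)) := by
    apply Continuous.integrable_of_hasCompactSupport (by fun_prop)
    apply HasCompactSupport.intro
      ((isCompact_Icc (a := -T) (b := T)).prod (isCompact_Icc (a := -T) (b := T)))
    intro q hq
    apply h
    have hq' : q.1 ∉ Icc (-T) T ∨ q.2 ∉ Icc (-T) T := by
      by_contra hc
      push_neg at hc
      exact hq (mem_prod.2 ⟨hc.1, hc.2⟩)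
    rcases hq' with h' | h' <;>
      [right; left] <;>
      · simp only [mem_Icc, not_and_or, not_le] at h'
        simp only [le_abs]
        rcases h' with hh | hh
        · exact Or.inr (by linarith)
        · exact Or.inl (by linarith)
  have e : (volume.restrict (Ioi (0:ℝ))).prod (volume : Measure ℝ)
      = (volume : Measure (ℝ × ℝ)).restrict ((Ioi 0) ×ˢ univ) := by
    calc (volume.restrict (Ioi (0:ℝ))).prod (volume : Measure ℝ)
        = (volume.restrict (Ioi (0:ℝ))).prod ((volume : Measure ℝ).restrict univ) := by
          rw [Measure.restrict_univ]
      _ = ((volume : Measure ℝ).prod volume).restrict ((Ioi 0) ×ˢ univ) :=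
          Measure.prod_restrict _ _
      _ = (volume : Measure (ℝ × ℝ)).restrict ((Ioi 0) ×ˢ univ) := by
          rw [← Measure.volume_eq_prod]
  have h2 : Integrable (Function.uncurry fun t x => f (x, t))
      ((volume.restrict (Ioi (0:ℝ))).prod volume) := by
    rw [show (Function.uncurry fun t x => f (x, t)) = fun q : ℝ × ℝ => f (q.2, q.1) from rfl, e]
    exact hint.restrict
  exact integral_integral_swap h2

private lemma mvt_bound {φ : ℝ × ℝ → ℝ} (hφ : ContDiff ℝ (⊤ : ℕ∞) φ) {Cx : ℝ}
    (hCx : ∀ p : ℝ × ℝ, ‖fderiv ℝ φ p (1, 0)‖ ≤ Cx) (a b t : ℝ) :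
    ‖φ (b, t) - φ (a, t)‖ ≤ Cx * ‖b - a‖ :=
  Convex.norm_image_sub_le_of_norm_hasDerivWithin_le (s := univ)
    (f := fun x => φ (x, t)) (f' := fun x => fderiv ℝ φ (x, t) (1, 0))
    (fun x _ => (hderiv_x (hφ.differentiable (by simp)) x t).hasDerivWithinAt)
    (fun x _ => hCx _) convex_univ (mem_univ a) (mem_univ b)

private lemma q_tendsto {φ : ℝ × ℝ → ℝ} (hφ : ContDiff ℝ (⊤ : ℕ∞) φ) (t : ℝ) :
    Tendsto (fun ε : ℝ => ε⁻¹ * (2 * φ (0, t) - φ (-(ε * t), t) - φ (ε * t, t)))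
      (nhdsWithin 0 (Ioi 0)) (nhds 0) := by
  set q : ℝ → ℝ := fun ε => 2 * φ (0, t) - φ (-(ε * t), t) - φ (ε * t, t) with hqdef
  have hd : Differentiable ℝ φ := hφ.differentiable (by simp)
  have h1 : HasDerivAt (fun ε : ℝ => φ (ε * t, t)) (fderiv ℝ φ (0, t) (t, 0)) 0 :=
    hderiv_diag hd t t
  have h2 : HasDerivAt (fun ε : ℝ => φ (-(ε * t), t)) (fderiv ℝ φ (0, t) (-t, 0)) 0 := by
    have h := hderiv_diag hd (-t) t
    have e : (fun ε : ℝ => φ (ε * -t, t)) = fun ε : ℝ => φ (-(ε * t), t) := by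
      funext ε; rw [mul_neg]
    rwa [e] at h
  have hq : HasDerivAt q 0 0 := by
    have h3 : HasDerivAt q (0 - fderiv ℝ φ (0, t) (-t, 0) - fderiv ℝ φ (0, t) (t, 0)) 0 :=
      ((hasDerivAt_const (0:ℝ) (2 * φ (0, t))).sub h2).sub h1
    convert h3 using 1
    have hsum : fderiv ℝ φ (0, t) (-t, 0) + fderiv ℝ φ (0, t) (t, 0)
        = fderiv ℝ φ (0, t) ((-t, 0) + (t, 0)) := (map_add _ _ _).symm
    have hz : ((-t, 0) : ℝ × ℝ) + (t, 0) = 0 := by ext <;> simp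
    rw [hz, map_zero] at hsum
    linarith
  have hq0 : q 0 = 0 := by simp [hqdef]; ring
  rw [hasDerivAt_iff_tendsto_slope] at hq
  have hmono : nhdsWithin (0:ℝ) (Ioi 0) ≤ nhdsWithin 0 {(0:ℝ)}ᶜ :=
    nhdsWithin_mono 0 (fun x hx => ne_of_gt hx)
  refine Tendsto.congr' ?_ (hq.mono_left hmono)
  filter_upwards [self_mem_nhdsWithin] with ε hε
  rw [slope_def_field, hq0, sub_zero, sub_zero, div_eq_inv_mul]

private lemma ae_bound_indicator {F : ℝ → ℝ} {T C : ℝ}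
    (hb : ∀ t, 0 < t → t ≤ T → ‖F t‖ ≤ C)
    (hz : ∀ t, 0 < t → T < t → F t = 0) :
    ∀ᵐ t ∂(volume.restrict (Ioi (0:ℝ))), ‖F t‖ ≤ (Ioc 0 T).indicator (fun _ => C) t := by
  rw [ae_restrict_iff' measurableSet_Ioi]
  filter_upwards with t ht
  by_cases hle : t ≤ T
  · have hmem : t ∈ Ioc 0 T := ⟨ht, hle⟩
    rw [indicator_of_mem hmem]
    exact hb t ht hle
  · rw [indicator_of_notMem (fun hmem => hle hmem.2)]
    rw [hz t ht (not_le.1 hle)]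
    simp

private lemma integrable_indicator_const (C T : ℝ) :
    Integrable ((Ioc (0:ℝ) T).indicator fun _ => C) (volume.restrict (Ioi 0)) :=
  IntegrableOn.integrable_indicator
    (integrableOn_const (lt_of_le_of_lt (Measure.restrict_apply_le _ _)
      measure_Ioc_lt_top).ne) measurableSet_Ioc

private lemma integrable_param {F : ℝ → ℝ} {T C : ℝ}
    (hasm : AEStronglyMeasurable F (volume.restrict (Ioi 0)))
    (hb : ∀ t, 0 < t → t ≤ T → ‖F t‖ ≤ C)
    (hz : ∀ t, 0 < t → T < t → F t = 0) :
    Integrable F (volume.restrict (Ioi 0)) :=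
  (integrable_indicator_const C T).mono' hasm (ae_bound_indicator hb hz)
private lemma part_delta {φ : ℝ × ℝ → ℝ} (hφ : IsTestFun φ) :
    Tendsto (fun ε : ℝ =>
        ∫ t in Ioi (0:ℝ), ∫ x : ℝ, sdw 1 1 (1 + 1/ε) (1 + 1/ε) ε x t * φ (x, t))
      (𝓝[>] (0:ℝ))
      (𝓝 ((∫ t in Ioi (0:ℝ), ∫ x : ℝ, (if x < 0 then (1:ℝ) else 1) * φ (x, t)) +
           2 * ∫ t in Ioi (0:ℝ), t * φ (0, t))) := by
  obtain ⟨hsm, hcs, h0⟩ := hφ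
  have hcφ : Continuous φ := hsm.continuous
  obtain ⟨R, hR⟩ := hcs.isBounded.subset_closedBall 0
  set T : ℝ := max R 0 + 1 with hTdef
  have hTpos : 0 < T := by positivity
  have hnm : ∀ p : ℝ × ℝ, T ≤ |p.1| ∨ T ≤ |p.2| → p ∉ tsupport φ := by
    intro p hp hmem
    have hball := hR hmem
    rw [Metric.mem_closedBall, dist_zero_right] at hball
    have h1 : |p.1| ≤ ‖p‖ := by rw [← Real.norm_eq_abs]; exact norm_fst_le p
    have h2 : |p.2| ≤ ‖p‖ := by rw [← Real.norm_eq_abs]; exact norm_snd_le p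
    have hRT : R < T := by
      have := le_max_left R 0
      simp only [hTdef]; linarith
    rcases hp with h | h <;> linarith
  have hφ0 : ∀ p : ℝ × ℝ, T ≤ |p.1| ∨ T ≤ |p.2| → φ p = 0 :=
    fun p hp => image_eq_zero_of_notMem_tsupport (hnm p hp)
  obtain ⟨Cφ, hCφ⟩ := hcs.exists_bound_of_continuous hcφ
  have hCφ0 : 0 ≤ Cφ := le_trans (norm_nonneg _) (hCφ (0, 0))
  have hIφ : ∀ t : ℝ, Integrable (fun x => φ (x, t)) :=
    integrable_slice_x hcφ (fun p hp => hφ0 p (Or.inl hp))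
  have hIz : ∀ t : ℝ, T < t → (∫ x, φ (x, t)) = 0 := by
    intro t htT
    have he : (fun x => φ (x, t)) = fun _ => (0:ℝ) := funext fun x =>
      hφ0 _ (Or.inr (by rw [abs_of_nonneg (by linarith)]; linarith))
    rw [he, integral_zero]
  have hIone : Integrable (fun t => ∫ x, φ (x, t)) (volume.restrict (Ioi 0)) :=
    integrable_param (T := T) (C := Cφ * (2 * T)) (asm_full hcφ)
      (fun t _ _ => norm_intx_le hcφ hTpos hCφ (fun p hp => hφ0 p (Or.inl hp)) t)
      (fun t _ hgt => hIz t hgt)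
  have hItwo : Integrable (fun t => 2 * t * φ (0, t)) (volume.restrict (Ioi 0)) := by
    apply Integrable.restrict
    apply Continuous.integrable_of_hasCompactSupport (by fun_prop)
    apply HasCompactSupport.intro (isCompact_Icc (a := -T) (b := T))
    intro t htmem
    have hz : φ (0, t) = 0 := by
      apply hφ0 _ (Or.inr _)
      simp only [mem_Icc, not_and_or, not_le] at htmem
      simp only [le_abs]
      rcases htmem with h | h
      · exact Or.inr (by linarith)
      · exact Or.inl (by linarith)
    rw [hz]; ring
  have htarget : (∫ t in Ioi (0:ℝ), ∫ x : ℝ, (if x < 0 then (1:ℝ) else 1) * φ (x, t)) +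
      2 * ∫ t in Ioi (0:ℝ), t * φ (0, t)
      = ∫ t in Ioi (0:ℝ), ((∫ x, φ (x, t)) + 2 * t * φ (0, t)) := by
    rw [integral_add hIone hItwo]
    congr 1
    · refine integral_congr_ae (Eventually.of_forall fun t => ?_)
      refine integral_congr_ae (Eventually.of_forall fun x => ?_)
      show (if x < 0 then (1:ℝ) else 1) * φ (x, t) = φ (x, t)
      split <;> ring
    · rw [← integral_const_mul]
      refine integral_congr_ae (Eventually.of_forall fun t => ?_)
      ring
  rw [htarget]
  have hmain : Tendsto (fun ε : ℝ => ∫ t in Ioi (0:ℝ),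
      ((∫ x, φ (x, t)) + ∫ y in Ioc (-t) t, φ (ε * y, t))) (𝓝[>] (0:ℝ))
      (𝓝 (∫ t in Ioi (0:ℝ), ((∫ x, φ (x, t)) + 2 * t * φ (0, t)))) := by
    apply tendsto_integral_filter_of_dominated_convergence
      ((Ioc 0 T).indicator fun _ => Cφ * (2 * T) + Cφ * (2 * T))
    · filter_upwards with ε
      exact (asm_full hcφ).add (asm_ioc hcφ ε)
    · filter_upwards [self_mem_nhdsWithin] with ε (hε : ε ∈ Ioi 0)
      apply ae_bound_indicator
      · intro t ht hle
        refine le_trans (norm_add_le _ _) (add_le_add ?_ ?_)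
        · exact norm_intx_le hcφ hTpos hCφ (fun p hp => hφ0 p (Or.inl hp)) t
        · refine le_trans (norm_intIoc_le (fun y => hCφ _) ht
            ((hcφ.comp (by fun_prop)).aestronglyMeasurable.restrict)) ?_
          nlinarith
      · intro t ht hgt
        rw [hIz t hgt]
        have he : (fun y => φ (ε * y, t)) = fun _ => (0:ℝ) := funext fun y =>
          hφ0 _ (Or.inr (by rw [abs_of_nonneg (by linarith)]; linarith))
        rw [he]
        simp
    · exact integrable_indicator_const _ _
    · rw [ae_restrict_iff' measurableSet_Ioi]
      filter_upwards with t ht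
      exact tendsto_const_nhds.add (inner_dct hcφ hCφ ht)
  refine Tendsto.congr' ?_ hmain
  filter_upwards [self_mem_nhdsWithin] with ε (hε : ε ∈ Ioi 0)
  have hε' : (0:ℝ) < ε := hε
  refine setIntegral_congr_fun measurableSet_Ioi (fun t ht => ?_)
  have ht' : (0:ℝ) < t := ht
  have hpt : (fun x => sdw 1 1 (1 + 1/ε) (1 + 1/ε) ε x t * φ (x, t))
      = fun x => φ (x, t) + ε⁻¹ * (Ico (-(ε * t)) (ε * t)).indicator (fun x => φ (x, t)) x := by
    funext x
    rw [sdw_formula hε' ht']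
    by_cases hx : x ∈ Ico (-(ε * t)) (ε * t)
    · rw [indicator_of_mem hx, indicator_of_mem hx]; ring
    · rw [indicator_of_notMem hx, indicator_of_notMem hx]; ring
  show (∫ x, φ (x, t)) + (∫ y in Ioc (-t) t, φ (ε * y, t))
      = ∫ x, sdw 1 1 (1 + 1/ε) (1 + 1/ε) ε x t * φ (x, t)
  rw [hpt, integral_add (hIφ t) (((hIφ t).indicator measurableSet_Ico).const_mul ε⁻¹)]
  congr 1
  rw [integral_const_mul, integral_indicator measurableSet_Ico]
  exact (subst_scale (fun x => φ (x, t)) hε' ht').symm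
set_option maxHeartbeats 1000000 in
private lemma part_weak {φ : ℝ × ℝ → ℝ} (hφ : IsTestFun φ) :
    Tendsto (fun ε : ℝ =>
        ∫ t in Ioi (0:ℝ), ∫ x : ℝ,
          (sdw 1 1 (1 + 1/ε) (1 + 1/ε) ε x t * fderiv ℝ φ (x, t) (0, 1) +
           twoFlux (fun u : ℝ => u) (fun u : ℝ => -u) x (sdw 1 1 (1 + 1/ε) (1 + 1/ε) ε x t) *
             fderiv ℝ φ (x, t) (1, 0)))
      (𝓝[>] (0:ℝ)) (𝓝 0) := by
  obtain ⟨hsm, hcs, h0⟩ := hφ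
  have hd : Differentiable ℝ φ := hsm.differentiable (by simp)
  have hcφ : Continuous φ := hsm.continuous
  have hDtc : Continuous fun p : ℝ × ℝ => fderiv ℝ φ p (0, 1) :=
    (hsm.continuous_fderiv (by simp)).clm_apply continuous_const
  have hDxc : Continuous fun p : ℝ × ℝ => fderiv ℝ φ p (1, 0) :=
    (hsm.continuous_fderiv (by simp)).clm_apply continuous_const
  obtain ⟨R, hR⟩ := hcs.isBounded.subset_closedBall 0
  set T : ℝ := max R 0 + 1 with hTdef
  have hTpos : 0 < T := by positivity
  have hnm : ∀ p : ℝ × ℝ, T ≤ |p.1| ∨ T ≤ |p.2| → p ∉ tsupport φ := by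
    intro p hp hmem
    have hball := hR hmem
    rw [Metric.mem_closedBall, dist_zero_right] at hball
    have h1 : |p.1| ≤ ‖p‖ := by rw [← Real.norm_eq_abs]; exact norm_fst_le p
    have h2 : |p.2| ≤ ‖p‖ := by rw [← Real.norm_eq_abs]; exact norm_snd_le p
    have hRT : R < T := by
      have := le_max_left R 0
      simp only [hTdef]; linarith
    rcases hp with h | h <;> linarith
  have hφ0 : ∀ p : ℝ × ℝ, T ≤ |p.1| ∨ T ≤ |p.2| → φ p = 0 :=
    fun p hp => image_eq_zero_of_notMem_tsupport (hnm p hp)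
  have hD0 : ∀ p : ℝ × ℝ, T ≤ |p.1| ∨ T ≤ |p.2| → fderiv ℝ φ p = 0 :=
    fun p hp => Function.notMem_support.mp
      (fun hmem => hnm p hp (support_fderiv_subset (𝕜 := ℝ) hmem))
  obtain ⟨Cφ, hCφ⟩ := hcs.exists_bound_of_continuous hcφ
  have hCφ0 : 0 ≤ Cφ := le_trans (norm_nonneg _) (hCφ (0, 0))
  have hcsDt : HasCompactSupport fun p : ℝ × ℝ => fderiv ℝ φ p (0, 1) := by
    apply HasCompactSupport.intro hcs
    intro p hp
    rw [Function.notMem_support.mp (fun hmem => hp (support_fderiv_subset (𝕜 := ℝ) hmem))]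
    rfl
  have hcsDx : HasCompactSupport fun p : ℝ × ℝ => fderiv ℝ φ p (1, 0) := by
    apply HasCompactSupport.intro hcs
    intro p hp
    rw [Function.notMem_support.mp (fun hmem => hp (support_fderiv_subset (𝕜 := ℝ) hmem))]
    rfl
  obtain ⟨Ct, hCt⟩ := hcsDt.exists_bound_of_continuous hDtc
  have hCt0 : 0 ≤ Ct := le_trans (norm_nonneg _) (hCt (0, 0))
  obtain ⟨Cx, hCx⟩ := hcsDx.exists_bound_of_continuous hDxc
  have hCx0 : 0 ≤ Cx := le_trans (norm_nonneg _) (hCx (0, 0))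
  have hDt0x : ∀ p : ℝ × ℝ, T ≤ |p.1| → fderiv ℝ φ p (0, 1) = 0 :=
    fun p hp => by rw [hD0 p (Or.inl hp)]; rfl
  have hDt0t : ∀ p : ℝ × ℝ, T ≤ |p.2| → fderiv ℝ φ p (0, 1) = 0 :=
    fun p hp => by rw [hD0 p (Or.inr hp)]; rfl
  have hIDt : ∀ t : ℝ, Integrable fun x => fderiv ℝ φ (x, t) (0, 1) :=
    integrable_slice_x hDtc hDt0x
  have hIDx : ∀ t : ℝ, Integrable fun x => fderiv ℝ φ (x, t) (1, 0) :=
    integrable_slice_x hDxc (fun p hp => by rw [hD0 p (Or.inl hp)]; rfl)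
  have hIsDx : ∀ t : ℝ,
      Integrable fun x => (if x < 0 then (1:ℝ) else -1) * fderiv ℝ φ (x, t) (1, 0) := by
    intro t
    refine (hIDx t).bdd_mul (c := 1) ?_ (ae_of_all _ ?_)
    · exact (Measurable.ite measurableSet_Iio measurable_const
        measurable_const).aestronglyMeasurable
    · intro x
      split <;> norm_num
  -- the `A`-part integrates to zero
  have hA0 : ∫ t in Ioi (0:ℝ), (∫ x, fderiv ℝ φ (x, t) (0, 1)) = 0 := by
    rw [fubini_swap hDtc (fun p hp => by rw [hD0 p hp]; rfl)]
    have hz : ∀ x : ℝ, ∫ t in Ioi (0:ℝ), fderiv ℝ φ (x, t) (0, 1) = 0 :=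
      ftc_t_Ioi hsm h0 hTpos (fun p hp => hφ0 p (Or.inr hp)) (fun p hp => hD0 p (Or.inr hp))
    simp_rw [hz]
    simp
  -- the `g`-part integrates to zero
  have hIg : Integrable (fun t => 2 * φ (0, t) + 2 * t * fderiv ℝ φ (0, t) (0, 1))
      (volume.restrict (Ioi 0)) := by
    apply Integrable.restrict
    apply Continuous.integrable_of_hasCompactSupport (by fun_prop)
    apply HasCompactSupport.intro (isCompact_Icc (a := -T) (b := T))
    intro t htmem
    have habs : T ≤ |t| := by
      simp only [mem_Icc, not_and_or, not_le] at htmem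
      simp only [le_abs]
      rcases htmem with h | h
      · exact Or.inr (by linarith)
      · exact Or.inl (by linarith)
    rw [hφ0 (0, t) (Or.inr habs), hDt0t (0, t) habs]
    ring
  have hg0 : ∫ t in Ioi (0:ℝ), (2 * φ (0, t) + 2 * t * fderiv ℝ φ (0, t) (0, 1)) = 0 := by
    have hder : ∀ t ∈ Ioi (0:ℝ), HasDerivAt (fun t => 2 * t * φ (0, t))
        (2 * φ (0, t) + 2 * t * fderiv ℝ φ (0, t) (0, 1)) t := by
      intro t _
      have h1 : HasDerivAt (fun t : ℝ => 2 * t) 2 t := by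
        simpa using (hasDerivAt_id t).const_mul (2:ℝ)
      have h2 : HasDerivAt (fun t => φ (0, t)) (fderiv ℝ φ (0, t) (0, 1)) t := hderiv_t hd 0 t
      have h3 := h1.mul h2
      simpa [Pi.mul_def] using h3
    have h := integral_Ioi_of_hasDerivAt_of_tendsto (a := 0) (m := 0)
      (Continuous.continuousWithinAt (by fun_prop)) hder hIg ?_
    · rw [h]
      simp [h0 (0, 0) le_rfl]
    · apply Tendsto.congr' _ tendsto_const_nhds
      filter_upwards [Ici_mem_atTop T] with t htT
      have htT' : T ≤ t := htT
      have hz : φ (0, t) = 0 :=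
        hφ0 _ (Or.inr (by rw [abs_of_nonneg (by linarith)]; exact htT'))
      rw [hz]
      ring
  -- integrability of the `A`-part in `t`
  have hIA : Integrable (fun t => ∫ x, fderiv ℝ φ (x, t) (0, 1))
      (volume.restrict (Ioi 0)) :=
    integrable_param (T := T) (C := Ct * (2 * T)) (asm_full hDtc)
      (fun t _ _ => norm_intx_le hDtc hTpos hCt hDt0x t)
      (fun t ht hgt => by
        have he : (fun x => fderiv ℝ φ (x, t) (0, 1)) = fun _ => (0:ℝ) :=
          funext fun x => hDt0t (x, t) (by rw [abs_of_nonneg (by linarith)]; linarith)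
        rw [he, integral_zero])
  have hL0 : ∫ t in Ioi (0:ℝ), ((∫ x, fderiv ℝ φ (x, t) (0, 1)) + 2 * φ (0, t)
      + 2 * t * fderiv ℝ φ (0, t) (0, 1)) = 0 := by
    have he : (fun t => (∫ x, fderiv ℝ φ (x, t) (0, 1)) + 2 * φ (0, t)
        + 2 * t * fderiv ℝ φ (0, t) (0, 1))
        = fun t => (∫ x, fderiv ℝ φ (x, t) (0, 1))
          + (2 * φ (0, t) + 2 * t * fderiv ℝ φ (0, t) (0, 1)) := by
      funext t; ring
    rw [he, integral_add hIA hIg, hA0, hg0]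
    ring
  have hmain : Tendsto (fun ε : ℝ => ∫ t in Ioi (0:ℝ),
      ((∫ x, fderiv ℝ φ (x, t) (0, 1)) + 2 * φ (0, t)
        + (∫ y in Ioc (-t) t, fderiv ℝ φ (ε * y, t) (0, 1))
        + ε⁻¹ * (2 * φ (0, t) - φ (-(ε * t), t) - φ (ε * t, t))))
      (𝓝[>] (0:ℝ))
      (𝓝 (∫ t in Ioi (0:ℝ), ((∫ x, fderiv ℝ φ (x, t) (0, 1)) + 2 * φ (0, t)
        + 2 * t * fderiv ℝ φ (0, t) (0, 1)))) := by
    apply tendsto_integral_filter_of_dominated_convergence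
      ((Ioc 0 T).indicator fun _ => Ct * (2 * T) + 2 * Cφ + Ct * (2 * T) + 2 * Cx * T)
    · filter_upwards with ε
      refine (((asm_full hDtc).add ?_).add (asm_ioc hDtc ε)).add ?_
      · exact (show Continuous fun t : ℝ => 2 * φ (0, t) by fun_prop).aestronglyMeasurable
      · exact (show Continuous fun t : ℝ =>
          ε⁻¹ * (2 * φ (0, t) - φ (-(ε * t), t) - φ (ε * t, t)) by fun_prop).aestronglyMeasurable
    · filter_upwards [self_mem_nhdsWithin] with ε (hε : ε ∈ Ioi 0)
      have hε' : (0:ℝ) < ε := hε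
      apply ae_bound_indicator
      · intro t ht hle
        have hεt : (0:ℝ) < ε * t := mul_pos hε' ht
        have hb1 : ‖∫ x, fderiv ℝ φ (x, t) (0, 1)‖ ≤ Ct * (2 * T) :=
          norm_intx_le hDtc hTpos hCt hDt0x t
        have hb2 : ‖2 * φ (0, t)‖ ≤ 2 * Cφ := by
          have h := hCφ (0, t)
          rw [norm_mul]
          have h2 : ‖(2:ℝ)‖ = 2 := by norm_num
          rw [h2]; linarith
        have hb3 : ‖∫ y in Ioc (-t) t, fderiv ℝ φ (ε * y, t) (0, 1)‖ ≤ Ct * (2 * T) := by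
          refine le_trans (norm_intIoc_le (fun y => hCt _) ht
            ((hDtc.comp (by fun_prop)).aestronglyMeasurable.restrict)) ?_
          nlinarith
        have hb4 : ‖ε⁻¹ * (2 * φ (0, t) - φ (-(ε * t), t) - φ (ε * t, t))‖ ≤ 2 * Cx * T := by
          have hq1 : ‖φ (0, t) - φ (-(ε * t), t)‖ ≤ Cx * (ε * t) := by
            have h := mvt_bound hsm hCx (-(ε * t)) 0 t
            rwa [show (0:ℝ) - -(ε * t) = ε * t by ring, Real.norm_eq_abs (ε * t),
              abs_of_pos hεt] at h
          have hq2 : ‖φ (0, t) - φ (ε * t, t)‖ ≤ Cx * (ε * t) := by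
            have h := mvt_bound hsm hCx (ε * t) 0 t
            rwa [show (0:ℝ) - ε * t = -(ε * t) by ring, norm_neg, Real.norm_eq_abs (ε * t),
              abs_of_pos hεt] at h
          have hQ : ‖2 * φ (0, t) - φ (-(ε * t), t) - φ (ε * t, t)‖ ≤ 2 * Cx * (ε * t) := by
            rw [show 2 * φ (0, t) - φ (-(ε * t), t) - φ (ε * t, t)
              = (φ (0, t) - φ (-(ε * t), t)) + (φ (0, t) - φ (ε * t, t)) by ring]
            refine le_trans (norm_add_le _ _) (by linarith)
          rw [norm_mul, Real.norm_eq_abs ε⁻¹, abs_of_pos (inv_pos.2 hε')]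
          calc ε⁻¹ * ‖2 * φ (0, t) - φ (-(ε * t), t) - φ (ε * t, t)‖
              ≤ ε⁻¹ * (2 * Cx * (ε * t)) :=
                mul_le_mul_of_nonneg_left hQ (le_of_lt (inv_pos.2 hε'))
            _ = 2 * Cx * t := by field_simp
            _ ≤ 2 * Cx * T := by nlinarith
        refine le_trans (norm_add_le _ _) ?_
        refine le_trans (add_le_add (norm_add_le _ _) le_rfl) ?_
        refine le_trans (add_le_add (add_le_add (norm_add_le _ _) le_rfl) le_rfl) ?_
        exact add_le_add (add_le_add (add_le_add hb1 hb2) hb3) hb4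
      · intro t ht hgt
        have habs : T ≤ |t| := by rw [abs_of_pos ht]; linarith
        have hz1 : (fun x => fderiv ℝ φ (x, t) (0, 1)) = fun _ => (0:ℝ) :=
          funext fun x => hDt0t (x, t) habs
        have hz3 : (fun y => fderiv ℝ φ (ε * y, t) (0, 1)) = fun _ => (0:ℝ) :=
          funext fun y => hDt0t (ε * y, t) habs
        have hz2 : φ (0, t) = 0 := hφ0 _ (Or.inr habs)
        have hz4 : φ (-(ε * t), t) = 0 := hφ0 _ (Or.inr habs)
        have hz5 : φ (ε * t, t) = 0 := hφ0 _ (Or.inr habs)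
        rw [hz1, hz3, hz2, hz4, hz5]
        simp
    · exact integrable_indicator_const _ _
    · rw [ae_restrict_iff' measurableSet_Ioi]
      filter_upwards with t ht
      have hlim := ((tendsto_const_nhds
          (x := (∫ x, fderiv ℝ φ (x, t) (0, 1)) + 2 * φ (0, t))).add
        (inner_dct hDtc hCt ht)).add (q_tendsto hsm t)
      simpa using hlim
  rw [hL0] at hmain
  refine Tendsto.congr' ?_ hmain
  filter_upwards [self_mem_nhdsWithin] with ε (hε : ε ∈ Ioi 0)
  have hε' : (0:ℝ) < ε := hε
  refine setIntegral_congr_fun measurableSet_Ioi (fun t ht => ?_)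
  have ht' : (0:ℝ) < t := ht
  have hεt : (0:ℝ) < ε * t := mul_pos hε' ht'
  have hψint : Integrable (fun x => fderiv ℝ φ (x, t) (0, 1)
      + (if x < 0 then (1:ℝ) else -1) * fderiv ℝ φ (x, t) (1, 0)) := (hIDt t).add (hIsDx t)
  have hpt : (fun x => sdw 1 1 (1 + 1/ε) (1 + 1/ε) ε x t * fderiv ℝ φ (x, t) (0, 1) +
      twoFlux (fun u : ℝ => u) (fun u : ℝ => -u) x (sdw 1 1 (1 + 1/ε) (1 + 1/ε) ε x t) *
        fderiv ℝ φ (x, t) (1, 0))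
      = fun x => (fderiv ℝ φ (x, t) (0, 1)
          + (if x < 0 then (1:ℝ) else -1) * fderiv ℝ φ (x, t) (1, 0))
        + ε⁻¹ * (Ico (-(ε * t)) (ε * t)).indicator
            (fun x => fderiv ℝ φ (x, t) (0, 1)
              + (if x < 0 then (1:ℝ) else -1) * fderiv ℝ φ (x, t) (1, 0)) x := by
    funext x
    rw [sdw_formula hε' ht']
    simp only [twoFlux]
    by_cases hx : x ∈ Ico (-(ε * t)) (ε * t)
    · rw [indicator_of_mem hx, indicator_of_mem hx]
      by_cases hx0 : x < 0 <;> simp only [if_pos, if_neg, hx0, if_true, if_false] <;> ring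
    · rw [indicator_of_notMem hx, indicator_of_notMem hx]
      by_cases hx0 : x < 0 <;> simp only [if_pos, if_neg, hx0, if_true, if_false] <;> ring
  have e1 : ∫ x, (if x < 0 then (1:ℝ) else -1) * fderiv ℝ φ (x, t) (1, 0) = 2 * φ (0, t) := by
    rw [← intervalIntegral.integral_Iio_add_Ici (b := (0:ℝ)) ((hIsDx t).integrableOn) ((hIsDx t).integrableOn)]
    have eA : ∫ x in Iio (0:ℝ), (if x < 0 then (1:ℝ) else -1) * fderiv ℝ φ (x, t) (1, 0)
        = φ (0, t) := by
      rw [setIntegral_congr_fun measurableSet_Iio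
        (fun x (hx : x < 0) => by rw [if_pos hx, one_mul]
          : EqOn _ (fun x => fderiv ℝ φ (x, t) (1, 0)) (Iio 0))]
      exact ftc_x_Iio hsm hTpos (fun p hp => hφ0 p (Or.inl hp))
        (fun p hp => hD0 p (Or.inl hp)) t
    have eB : ∫ x in Ici (0:ℝ), (if x < 0 then (1:ℝ) else -1) * fderiv ℝ φ (x, t) (1, 0)
        = φ (0, t) := by
      rw [setIntegral_congr_fun measurableSet_Ici
        (fun x (hx : (0:ℝ) ≤ x) => by rw [if_neg (not_lt.2 hx)]; ring
          : EqOn _ (fun x => -(fderiv ℝ φ (x, t) (1, 0))) (Ici 0)),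
        integral_neg, integral_Ici_eq_integral_Ioi,
        ftc_x_Ioi hsm hTpos (fun p hp => hφ0 p (Or.inl hp))
          (fun p hp => hD0 p (Or.inl hp)) t]
      ring
    rw [eA, eB]
    ring
  have e2 : ε⁻¹ * ∫ x in Ico (-(ε * t)) (ε * t), fderiv ℝ φ (x, t) (0, 1)
      = ∫ y in Ioc (-t) t, fderiv ℝ φ (ε * y, t) (0, 1) :=
    subst_scale (fun x => fderiv ℝ φ (x, t) (0, 1)) hε' ht'
  have e3 : ∫ x in Ico (-(ε * t)) (ε * t),
      (if x < 0 then (1:ℝ) else -1) * fderiv ℝ φ (x, t) (1, 0)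
      = 2 * φ (0, t) - φ (-(ε * t), t) - φ (ε * t, t) := by
    rw [show Ico (-(ε * t)) (ε * t) = Ico (-(ε * t)) 0 ∪ Ico 0 (ε * t) from
      (Ico_union_Ico_eq_Ico (by linarith) (by linarith)).symm]
    rw [setIntegral_union (Ico_disjoint_Ico_same) measurableSet_Ico
      ((hIsDx t).integrableOn) ((hIsDx t).integrableOn)]
    have eA : ∫ x in Ico (-(ε * t)) 0, (if x < 0 then (1:ℝ) else -1) * fderiv ℝ φ (x, t) (1, 0)
        = φ (0, t) - φ (-(ε * t), t) := by
      rw [setIntegral_congr_fun measurableSet_Ico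
        (fun x hx => by rw [if_pos hx.2, one_mul]
          : EqOn _ (fun x => fderiv ℝ φ (x, t) (1, 0)) (Ico (-(ε * t)) 0))]
      rw [integral_Ico_eq_integral_Ioo, ← integral_Ioc_eq_integral_Ioo,
        ← intervalIntegral.integral_of_le (by linarith : -(ε * t) ≤ 0)]
      exact ftc_x hsm (fun p hp => hD0 p (Or.inl hp)) (-(ε * t)) 0 t
    have eB : ∫ x in Ico 0 (ε * t), (if x < 0 then (1:ℝ) else -1) * fderiv ℝ φ (x, t) (1, 0)
        = -(φ (ε * t, t) - φ (0, t)) := by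
      rw [setIntegral_congr_fun measurableSet_Ico
        (fun x hx => by rw [if_neg (not_lt.2 hx.1)]; ring
          : EqOn _ (fun x => -(fderiv ℝ φ (x, t) (1, 0))) (Ico 0 (ε * t))),
        integral_neg, integral_Ico_eq_integral_Ioo, ← integral_Ioc_eq_integral_Ioo,
        ← intervalIntegral.integral_of_le (by linarith : (0:ℝ) ≤ ε * t),
        ftc_x hsm (fun p hp => hD0 p (Or.inl hp)) 0 (ε * t) t]
    rw [eA, eB]
    ring
  show (∫ x, fderiv ℝ φ (x, t) (0, 1)) + 2 * φ (0, t)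
      + (∫ y in Ioc (-t) t, fderiv ℝ φ (ε * y, t) (0, 1))
      + ε⁻¹ * (2 * φ (0, t) - φ (-(ε * t), t) - φ (ε * t, t))
      = ∫ x, (sdw 1 1 (1 + 1/ε) (1 + 1/ε) ε x t * fderiv ℝ φ (x, t) (0, 1) +
          twoFlux (fun u : ℝ => u) (fun u : ℝ => -u) x (sdw 1 1 (1 + 1/ε) (1 + 1/ε) ε x t) *
            fderiv ℝ φ (x, t) (1, 0))
  rw [hpt, integral_add hψint ((hψint.indicator measurableSet_Ico).const_mul ε⁻¹),
    integral_const_mul, integral_indicator measurableSet_Ico,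
    integral_add (hIDt t) (hIsDx t),
    integral_add ((hIDt t).integrableOn) ((hIsDx t).integrableOn),
    e1, e3, mul_add, e2]
  ring
/-- example `f_l(u) = u`, `f_r(u) = -u`, `u0 = u1 = 1`, `κ = 2`. -/
theorem example_linear_fluxes
    (fl fr : ℝ → ℝ)
    (hfl : fl = fun u : ℝ => u) (hfr : fr = fun u : ℝ => -u)
    (u0e u1e : ℝ → ℝ)
    (hu0e : u0e = fun ε : ℝ => 1 + 1 / ε) (hu1e : u1e = fun ε : ℝ => 1 + 1 / ε) :
    fl 1 - fr 1 = 2 ∧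
    WeakAsymptoticSolution fl fr 1 1 u0e u1e ∧
    ConvergesToDeltaShock 1 1 u0e u1e 2 := by
  subst hfl; subst hfr; subst hu0e; subst hu1e
  refine ⟨by norm_num, ?_, ?_⟩
  · intro φ hφ
    exact part_weak hφ
  · intro φ hφ
    exact part_delta hφ
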